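/- Let w be a Fubini word in W_{n,k} with initial positions {i_1 < ... < i_m} (so m = k), and let w * 1 in W_{n+1,k} be the word obtained by appending w_{i_m} (the last initial letter) to w. Then conv(w*1) = conv(w) followed by w_{i_m}, std(conv(w*1)) = std(conv(w)) x 1 in S_{n+1}, and sigma(w*1) = sigma(w) x 1 in S_{n+1}; consequently the Schubert polynomial satisfies S_{w*1} = S_w. -/

import Mathlib

/-!
The last initial letter `c` of `w` labels the last block of the convex word `conv(w)`, so
`conv(w) c` is still convex, with the multiplicities and initial letters of `w c`; since a
convex word is determined by these data, `conv(w c) = conv(w) c`. The appended position is not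
initial and comes after all `n - k` non-initial positions of `conv(w)`, so standardization sends
it to `k + (n - k) = n`. Its sort key `(firstOcc c, n)` is the largest, so `σ(w c) = σ(w) × 1`.
What remains is the stability `S_(u × 1) = S_u` of Schubert polynomials: both sides satisfy the
same divided-difference recursion, which reduces it to `u = w₀`, and `w₀ × 1` is reached from
`w₀ ∈ S_(N+1)` by the transpositions `s₀, …, s_(N-1)`, along which the divided differences
lower the staircase monomial of `S_(N+1)` one exponent at a time to that of `S_N`.
-/

/-- The position (0-indexed) of the first occurrence of the letter `c` in the word `w`. -/
noncomputable def firstOcc (n k : ℕ) (w : Fin n → Fin k) (c : Fin k) : ℕ :=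
  sInf {i : ℕ | ∃ h : i < n, w ⟨i, h⟩ = c}

/-- The sorting key grouping the positions of `w` by the first occurrence of their letter. -/
noncomputable def sortKey (n k : ℕ) (w : Fin n → Fin k) (i : Fin n) : Lex (ℕ × ℕ) :=
  toLex (firstOcc n k w (w i), (i : ℕ))

/-- `σ(w)`: the permutation obtained by listing, for each initial letter of `w` in order, the
positions of all occurrences of that letter in increasing order; it is the minimal permutation
sending the convexification `conv(w)` to `w`. -/
noncomputable def sigmaPerm (n k : ℕ) (w : Fin n → Fin k) : Equiv.Perm (Fin n) :=
  (Tuple.sort (sortKey n k w))⁻¹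

/-- A word `v` is convex if it contains no subword `i … j … i` with `i ≠ j`. -/
def IsConvexWord {n k : ℕ} (v : Fin n → Fin k) : Prop :=
  ∀ a b c : Fin n, a < b → b < c → v a = v c → v a = v b

/-- A position `i` is initial in `v` if `v i' ≠ v i` for all `i' < i`. -/
def isInitialPos {n k : ℕ} (v : Fin n → Fin k) (i : Fin n) : Prop :=
  ∀ i' : Fin n, i' < i → v i' ≠ v i

instance {n k : ℕ} (v : Fin n → Fin k) (i : Fin n) : Decidable (isInitialPos v i) := by
  unfold isInitialPos; infer_instance

/-- The sequence of initial letters of `v`, read from left to right. -/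
def initialList {n k : ℕ} (v : Fin n → Fin k) : List (Fin k) :=
  ((List.finRange n).filter fun i => decide (isInitialPos v i)).map v

/-- `v` is the convexification of `w`: the unique convex word with the same letter
multiplicities as `w` whose initial letters appear in the same left-to-right order. -/
def IsConvexification {n k : ℕ} (v w : Fin n → Fin k) : Prop :=
  IsConvexWord v ∧
    (∀ c, (Finset.univ.filter fun i => v i = c).card
      = (Finset.univ.filter fun i => w i = c).card) ∧
    initialList v = initialList w

/-- `s` is the standardization `std(v) ∈ S_n` of a Fubini word `v ∈ {1,…,k}^n`: initial
positions keep their letter, and the letters in non-initial positions are replaced, from left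
to right, by `k+1, k+2, …` (everything written 0-indexed). -/
def IsStdPerm (n k : ℕ) (v : Fin n → Fin k) (s : Equiv.Perm (Fin n)) : Prop :=
  ∀ i : Fin n, (s i : ℕ) =
    if isInitialPos v i then (v i : ℕ)
    else k + (Finset.univ.filter fun i' : Fin n => i' < i ∧ ¬ isInitialPos v i').card

/-- Extend a permutation of `Fin N` to `ℕ`, fixing all `m ≥ N`. -/
def permExt (N : ℕ) (p : Equiv.Perm (Fin N)) : ℕ → ℕ :=
  fun m => if h : m < N then ((p ⟨m, h⟩ : Fin N) : ℕ) else m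

open Equiv MvPolynomial Finset

namespace Equiv.Perm

variable {N : ℕ}

/-- `u × 1` in the paper's notation. -/
def extendLast (u : Perm (Fin N)) : Perm (Fin (N + 1)) where
  toFun := Fin.lastCases (Fin.last N) fun i => (u i).castSucc
  invFun := Fin.lastCases (Fin.last N) fun i => (u⁻¹ i).castSucc
  left_inv j := by cases j using Fin.lastCases <;> simp
  right_inv j := by cases j using Fin.lastCases <;> simp

@[simp]
lemma extendLast_castSucc (u : Perm (Fin N)) (i : Fin N) :
    extendLast u i.castSucc = (u i).castSucc := by
  simp [extendLast]

@[simp]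
lemma extendLast_last (u : Perm (Fin N)) : extendLast u (Fin.last N) = Fin.last N := by
  simp [extendLast]

lemma val_extendLast (u : Perm (Fin N)) (j : Fin (N + 1)) :
    (extendLast u j : ℕ) = if h : (j : ℕ) < N then (u ⟨j, h⟩ : ℕ) else N := by
  cases j using Fin.lastCases <;> simp

lemma extendLast_inv (u : Perm (Fin N)) : (extendLast u)⁻¹ = extendLast u⁻¹ := rfl

lemma extendLast_mul (u u' : Perm (Fin N)) :
    extendLast (u * u') = extendLast u * extendLast u' := by
  ext j
  cases j using Fin.lastCases <;> simp

lemma extendLast_swap (a b : Fin N) :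
    extendLast (swap a b) = swap a.castSucc b.castSucc := by
  ext j
  cases j using Fin.lastCases with
  | last => simp [swap_apply_of_ne_of_ne (Fin.castSucc_lt_last a).ne' (Fin.castSucc_lt_last b).ne']
  | cast i => simp [swap_apply_def, apply_ite Fin.castSucc]

lemma permExt_extendLast (u : Perm (Fin N)) : permExt (N + 1) (extendLast u) = permExt N u := by
  funext m
  simp only [permExt, val_extendLast]
  split_ifs <;> first | rfl | omega

end Equiv.Perm

open Equiv.Perm

/-- `x₀^(N-1) ⋯ x_(m-1)^(N-m) · x_m^(N-m) x_(m+1)^(N-m-1) ⋯ x_N^0`: for `m = 0` the staircase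
monomial of `S_(N+1)`, for `m = N` that of `S_N`. -/
noncomputable def partialStaircase (N m : ℕ) : MvPolynomial ℕ ℤ :=
  ∏ j ∈ range (N + 1), X j ^ (if j < m then N - 1 - j else N - j)

lemma partialStaircase_eq_X_mul {N m : ℕ} (hm : m < N) :
    partialStaircase N m = X m * partialStaircase N (m + 1) := by
  have hexp : ∀ j, (if j < m then N - 1 - j else N - j)
      = (if j < m + 1 then N - 1 - j else N - j) + if j = m then 1 else 0 := by
    intro j; split_ifs <;> omega
  simp only [partialStaircase, hexp, pow_add, prod_mul_distrib, pow_ite, pow_one, pow_zero,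
    prod_ite_eq', mem_range, show m < N + 1 by omega, if_true]
  ring

lemma rename_swap_partialStaircase {N m : ℕ} (hm : m < N) :
    rename (swap m (m + 1)) (partialStaircase N (m + 1)) = partialStaircase N (m + 1) := by
  have hexp : ∀ j, (if swap m (m + 1) j < m + 1 then N - 1 - swap m (m + 1) j
      else N - swap m (m + 1) j) = if j < m + 1 then N - 1 - j else N - j := by
    intro j
    rw [swap_apply_def]
    split_ifs <;> omega
  rw [partialStaircase, map_prod]
  simp only [map_pow, rename_X]
  have hsupp : {j | swap m (m + 1) j ≠ j} ⊆ range (N + 1) := fun j hj => by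
    by_contra hjN
    rw [mem_coe, mem_range] at hjN
    exact hj (swap_apply_of_ne_of_ne (by omega) (by omega))
  conv_rhs => rw [← (swap m (m + 1)).prod_comp _ _ hsupp]
  simp only [hexp]

lemma partialStaircase_succ_divDiff {N m : ℕ} (hm : m < N) :
    (X m - X (m + 1)) * partialStaircase N (m + 1)
      = partialStaircase N m - rename (swap m (m + 1)) (partialStaircase N m) := by
  rw [partialStaircase_eq_X_mul hm, map_mul, rename_X, swap_apply_left,
    rename_swap_partialStaircase hm]
  ring

lemma eq_revPerm_of_strictAnti {N : ℕ} {u : Perm (Fin N)} (hu : StrictAnti u) :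
    u = Fin.revPerm := by
  ext j
  have := (hu.comp Fin.rev_strictAnti).apply_eq (x := Fin.rev j)
  simp only [Function.comp_apply, Fin.rev_rev] at this
  simp [this]

lemma exists_adjacent_ascent_of_not_strictAnti {N : ℕ} {u : Perm (Fin N)} (hu : ¬ StrictAnti u) :
    ∃ a b : Fin N, (b : ℕ) = a + 1 ∧ u a < u b := by
  cases N with
  | zero => exact absurd (fun a => a.elim0) hu
  | succ M =>
    rw [Fin.strictAnti_iff_succ_lt] at hu
    push Not at hu
    obtain ⟨i, hi⟩ := hu
    exact ⟨i.castSucc, i.succ, by simp,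
      lt_of_le_of_ne hi (u.injective.ne (Fin.castSucc_lt_succ (i := i)).ne)⟩

lemma sum_mul_swap_lt {N : ℕ} {u : Perm (Fin N)} {a b : Fin N} (hab : (b : ℕ) = a + 1)
    (hu : u a < u b) :
    ∑ j : Fin N, (j : ℕ) * (u (swap a b j) : ℕ) < ∑ j : Fin N, (j : ℕ) * (u j : ℕ) := by
  have hne : a ≠ b := fun h => by simp [h] at hab
  have hrest : ∀ j ∈ (univ.erase b).erase a, (j : ℕ) * (u (swap a b j) : ℕ) = j * u j := by
    intro j hj
    simp only [mem_erase] at hj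
    rw [swap_apply_of_ne_of_ne hj.1 hj.2.1]
  rw [← add_sum_erase _ _ (mem_univ b), ← add_sum_erase _ _ (mem_erase.2 ⟨hne, mem_univ a⟩),
    ← add_sum_erase _ _ (mem_univ b), ← add_sum_erase _ _ (mem_erase.2 ⟨hne, mem_univ a⟩),
    sum_congr rfl hrest, swap_apply_left, swap_apply_right, hab]
  rw [Fin.lt_def] at hu
  nlinarith

section Schubert

variable {Sch : (N : ℕ) → Perm (Fin N) → MvPolynomial ℕ ℤ}
  {D : ℕ → MvPolynomial ℕ ℤ → MvPolynomial ℕ ℤ}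
  (hD : ∀ (a : ℕ) (f : MvPolynomial ℕ ℤ),
    (X a - X (a + 1)) * D a f = f - rename (swap a (a + 1)) f)
  (hSch0 : ∀ (N : ℕ) (w0 : Perm (Fin N)), (∀ j : Fin N, (w0 j : ℕ) = N - 1 - j) →
    Sch N w0 = ∏ j : Fin N, X (j : ℕ) ^ (N - 1 - (j : ℕ)))
  (hSch : ∀ (N : ℕ) (w : Perm (Fin N)) (a b : Fin N), (b : ℕ) = a + 1 → w b < w a →
    Sch N (w * swap a b) = D a (Sch N w))

include hD in
lemma divDiff_eq_of_mul_eq {a : ℕ} {f g : MvPolynomial ℕ ℤ}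
    (h : (X a - X (a + 1)) * g = f - rename (swap a (a + 1)) f) : D a f = g := by
  have hX : (X a - X (a + 1) : MvPolynomial ℕ ℤ) ≠ 0 :=
    sub_ne_zero.2 fun h => by simpa using X_injective h
  exact mul_left_cancel₀ hX ((hD a f).trans h.symm)

include hD hSch0 hSch in
/-- `W = w₀ s₀ s₁ ⋯ s_(m-1)` in `S_(N+1)`; for `m = N` this is `w₀ × 1`. -/
lemma sch_eq_partialStaircase {N m : ℕ} (hm : m ≤ N) (W : Perm (Fin (N + 1)))
    (hW : ∀ j : Fin (N + 1),
      (W j : ℕ) = if (j : ℕ) < m then N - 1 - j else if (j : ℕ) = m then N else N - j) :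
    Sch (N + 1) W = partialStaircase N m := by
  induction m generalizing W with
  | zero =>
    rw [hSch0 _ W fun j => by rw [hW]; split_ifs <;> omega, partialStaircase,
      Fin.prod_univ_eq_prod_range (fun j => (X j : MvPolynomial ℕ ℤ) ^ (N + 1 - 1 - j))]
    simp
  | succ m ih =>
    let a : Fin (N + 1) := ⟨m, by omega⟩
    let b : Fin (N + 1) := ⟨m + 1, by omega⟩
    have hW' : ∀ j : Fin (N + 1), (W (swap a b j) : ℕ)
        = if (j : ℕ) < m then N - 1 - j else if (j : ℕ) = m then N else N - j := by
      intro j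
      rw [swap_apply_def]
      split_ifs <;> rw [hW] <;> simp only [a, b, Fin.ext_iff] at * <;> split_ifs <;> omega
    have hdesc : (W * swap a b) b < (W * swap a b) a := by
      rw [Fin.lt_def, mul_apply, mul_apply, hW', hW']
      simp only [a, b]
      split_ifs <;> omega
    have hW_eq : W = W * swap a b * swap a b := by rw [mul_assoc, swap_mul_self, mul_one]
    rw [hW_eq, hSch _ _ a b rfl hdesc, ih (by omega) _ hW']
    exact divDiff_eq_of_mul_eq hD (partialStaircase_succ_divDiff (m := m) (by omega))

include hD hSch0 hSch in
lemma sch_extendLast_revPerm (N : ℕ) :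
    Sch (N + 1) (extendLast Fin.revPerm) = Sch N Fin.revPerm := by
  rw [sch_eq_partialStaircase hD hSch0 hSch le_rfl _ fun j => ?_, hSch0 N _ fun j => ?_,
    partialStaircase, prod_range_succ, Fin.prod_univ_eq_prod_range
      (fun j => (X j : MvPolynomial ℕ ℤ) ^ (N - 1 - j))]
  · simp only [lt_irrefl, if_false, Nat.sub_self, pow_zero, mul_one]
    exact prod_congr rfl fun j hj => by rw [if_pos (mem_range.1 hj)]
  · rw [Fin.revPerm_apply, Fin.val_rev]; omega
  · rw [val_extendLast]
    split_ifs <;> (try rw [Fin.revPerm_apply, Fin.val_rev, Fin.val_mk]) <;> omega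

include hD hSch0 hSch in
/-- Induction on `∑ j * u j`, which drops when an adjacent ascent of `u` is swapped; a
permutation without adjacent ascents is `w₀`. -/
theorem sch_extendLast {N : ℕ} (u : Perm (Fin N)) : Sch (N + 1) (extendLast u) = Sch N u := by
  induction hμ : ∑ j : Fin N, (j : ℕ) * (u j : ℕ) using Nat.strong_induction_on
    generalizing u with
  | _ μ ih =>
  by_cases hu : StrictAnti u
  · rw [eq_revPerm_of_strictAnti hu]
    exact sch_extendLast_revPerm hD hSch0 hSch N
  obtain ⟨a, b, hab, hasc⟩ := exists_adjacent_ascent_of_not_strictAnti hu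
  set u' := u * swap a b
  have hu_eq : u = u' * swap a b := by rw [mul_assoc, swap_mul_self, mul_one]
  have hdesc : u' b < u' a := by simpa [u'] using hasc
  have ih' := ih _ (hμ ▸ sum_mul_swap_lt hab hasc) u' rfl
  rw [hu_eq, extendLast_mul, extendLast_swap,
    hSch _ _ _ _ (by simpa using hab) (by simpa using hdesc), ih', Fin.val_castSucc,
    hSch _ _ _ _ hab hdesc]

end Schubert

section Words

variable {n k : ℕ}

lemma IsConvexWord.apply_eq_of_le_of_le {v : Fin n → Fin k} (hv : IsConvexWord v)
    {a b c : Fin n} (hab : a ≤ b) (hbc : b ≤ c) (hac : v a = v c) : v b = v a := by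
  rcases hab.eq_or_lt with rfl | hab
  · rfl
  rcases hbc.eq_or_lt with rfl | hbc
  · exact hac.symm
  exact (hv a b c hab hbc hac).symm

lemma exists_isInitialPos_le (v : Fin n → Fin k) (i : Fin n) :
    ∃ p ≤ i, v p = v i ∧ isInitialPos v p := by
  obtain ⟨p, hp, hmin⟩ := (univ.filter fun j => v j = v i).exists_min_image id ⟨i, by simp⟩
  rw [mem_filter] at hp
  exact ⟨p, hmin i (by simp), hp.2, fun j hj hjp =>
    (hmin j (mem_filter.2 ⟨mem_univ _, hjp.trans hp.2⟩)).not_gt hj⟩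

lemma isInitialPos.eq_of_apply_eq {v : Fin n → Fin k} {p q : Fin n} (hp : isInitialPos v p)
    (hq : isInitialPos v q) (h : v p = v q) : p = q := by
  rcases lt_trichotomy p q with hpq | rfl | hqp
  · exact absurd h (hq p hpq)
  · rfl
  · exact absurd h.symm (hp q hqp)

lemma IsConvexWord.exists_succ_eq_of_not_isInitialPos {v : Fin n → Fin k} (hv : IsConvexWord v)
    {i : Fin n} (hi : ¬ isInitialPos v i) : ∃ p : Fin n, (p : ℕ) + 1 = i ∧ v p = v i := by
  simp only [isInitialPos, not_forall, not_not] at hi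
  obtain ⟨j, hji, hj⟩ := hi
  let p : Fin n := ⟨i - 1, by omega⟩
  have hjp : j ≤ p := by rw [Fin.le_def]; simp only [p]; omega
  have hpi : p ≤ i := by rw [Fin.le_def]; simp only [p]; omega
  exact ⟨p, by simp only [p]; omega, (hv.apply_eq_of_le_of_le hjp hpi hj).trans hj⟩

lemma card_filter_isInitialPos {v : Fin n → Fin k} (hv : Function.Surjective v) :
    #{i | isInitialPos v i} = k := by
  conv_rhs => rw [← Fintype.card_fin k, ← card_univ]
  refine card_bij (fun i _ => v i) (fun _ _ => mem_univ _)
    (fun p hp q hq h => (mem_filter.1 hp).2.eq_of_apply_eq (mem_filter.1 hq).2 h) fun c _ => ?_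
  obtain ⟨i, rfl⟩ := hv c
  obtain ⟨p, -, hp, hpi⟩ := exists_isInitialPos_le v i
  exact ⟨p, mem_filter.2 ⟨mem_univ _, hpi⟩, hp⟩

def initialPrefix (v : Fin n → Fin k) (i : ℕ) : List (Fin k) :=
  (((List.finRange n).take i).filter fun j => isInitialPos v j).map v

lemma initialPrefix_congr {v v' : Fin n → Fin k} {i : ℕ}
    (h : ∀ j : Fin n, (j : ℕ) < i → v j = v' j) : initialPrefix v i = initialPrefix v' i := by
  have hlt : ∀ j ∈ (List.finRange n).take i, (j : ℕ) < i := fun j hj => by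
    obtain ⟨m, hm, rfl⟩ := List.mem_iff_getElem.1 hj
    simp only [List.length_take, List.length_finRange] at hm
    simp only [List.getElem_take, List.getElem_finRange, Fin.cast_mk]
    omega
  have hinit : ∀ j : Fin n, (j : ℕ) < i → (isInitialPos v j ↔ isInitialPos v' j) := by
    intro j hj
    simp only [isInitialPos]
    exact forall_congr' fun j' => imp_congr_right fun hj' => by
      rw [h j' (by rw [Fin.lt_def] at hj'; omega), h j hj]
  rw [initialPrefix, initialPrefix,
    List.filter_congr fun j hj => decide_eq_decide.2 (hinit j (hlt j hj))]
  exact List.map_congr_left fun j hj => h j (hlt j (List.mem_of_mem_filter hj))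

lemma initialList_eq_append_cons {v : Fin n → Fin k} {p : Fin n} (hp : isInitialPos v p) :
    initialList v = initialPrefix v p
      ++ v p :: (((List.finRange n).drop (p + 1)).filter fun j => isInitialPos v j).map v := by
  have hsplit : List.finRange n
      = (List.finRange n).take p ++ p :: (List.finRange n).drop (p + 1) := by
    conv_lhs => rw [← List.take_append_drop p (List.finRange n)]
    rw [List.drop_eq_getElem_cons (by simp)]
    simp
  conv_lhs => rw [initialList, hsplit, List.filter_append,
    List.filter_cons_of_pos (by simpa using hp), List.map_append, List.map_cons]
  rfl

lemma initialList_getLast?_eq {v : Fin n → Fin k} {p : Fin n} (hp : isInitialPos v p)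
    (hlast : ∀ q, p < q → ¬ isInitialPos v q) : (initialList v).getLast? = some (v p) := by
  have hnil : ((List.finRange n).drop (p + 1)).filter (fun j => isInitialPos v j) = [] := by
    refine List.filter_eq_nil_iff.2 fun q hq => ?_
    obtain ⟨m, hm, rfl⟩ := List.mem_iff_getElem.1 hq
    simpa using hlast _ (Fin.lt_def.2 (by dsimp only; omega))
  rw [initialList_eq_append_cons hp, hnil, List.map_nil, List.getLast?_concat]

lemma IsConvexWord.initialList_getLast? {v : Fin n → Fin k} (hv : IsConvexWord v) {i : Fin n}
    (hi : ∀ j, j ≤ i) : (initialList v).getLast? = some (v i) := by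
  obtain ⟨p, hpi, hp, hpinit⟩ := exists_isInitialPos_le v i
  rw [initialList_getLast?_eq hpinit fun q hpq hq => hq p hpq ?_, hp]
  exact (hv.apply_eq_of_le_of_le hpq.le (hi q) hp).symm

/-- Otherwise the letter of the block of `v'` running through `i` has all its occurrences in `v`
before `i`, one fewer than in `v'`. -/
lemma IsConvexWord.isInitialPos_of_forall_lt_eq {v v' : Fin n → Fin k}
    (hv : IsConvexWord v) (hv' : IsConvexWord v')
    (hm : ∀ c, #{i | v i = c} = #{i | v' i = c}) {i : Fin n}
    (hpre : ∀ j, j < i → v j = v' j) (hi : isInitialPos v i) : isInitialPos v' i := by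
  by_contra hi'
  obtain ⟨p, hpi, hp⟩ := hv'.exists_succ_eq_of_not_isInitialPos hi'
  have hpi' : p < i := by rw [Fin.lt_def]; omega
  have hvp : v p = v' i := (hpre p hpi').trans hp
  have hbefore : ∀ j, v j = v' i → j < i := fun j hj => by
    by_contra hij
    exact hi p hpi' (hvp.trans ((hv.apply_eq_of_le_of_le hpi'.le (not_lt.1 hij)
      (hvp.trans hj.symm)).trans hvp).symm)
  have hsub : insert i (univ.filter fun j => v j = v' i) ⊆ univ.filter fun j => v' j = v' i := by
    intro j hj
    rcases mem_insert.1 hj with rfl | hj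
    · simp
    · rw [mem_filter] at hj ⊢
      exact ⟨mem_univ _, (hpre j (hbefore j hj.2)).symm.trans hj.2⟩
  have hi_notMem : i ∉ univ.filter fun j => v j = v' i := fun h =>
    (hbefore i (mem_filter.1 h).2).false
  have := card_le_card hsub
  rw [card_insert_of_notMem hi_notMem, hm] at this
  omega

lemma IsConvexWord.eq_of_initialList_eq {v v' : Fin n → Fin k}
    (hv : IsConvexWord v) (hv' : IsConvexWord v')
    (hm : ∀ c, #{i | v i = c} = #{i | v' i = c}) (hl : initialList v = initialList v') :
    v = v' := by
  funext i
  induction i using WellFoundedLT.induction with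
  | _ i ih =>
  by_cases hi : isInitialPos v i
  · have hi' := hv.isInitialPos_of_forall_lt_eq hv' hm ih hi
    rw [initialList_eq_append_cons hi, initialList_eq_append_cons hi',
      initialPrefix_congr fun j hj => ih j (by rw [Fin.lt_def]; exact hj)] at hl
    exact (List.cons_eq_cons.1 (List.append_cancel_left hl)).1
  · have hi' : ¬ isInitialPos v' i := fun hi' =>
      hi (hv'.isInitialPos_of_forall_lt_eq hv (fun c => (hm c).symm) (fun j hj => (ih j hj).symm)
        hi')
    obtain ⟨p, hpi, hp⟩ := hv.exists_succ_eq_of_not_isInitialPos hi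
    obtain ⟨p', hpi', hp'⟩ := hv'.exists_succ_eq_of_not_isInitialPos hi'
    obtain rfl : p = p' := Fin.ext (by omega)
    rw [← hp, ← hp', ih p (by rw [Fin.lt_def]; omega)]

lemma IsConvexification.eq {v v' w : Fin n → Fin k} (hv : IsConvexification v w)
    (hv' : IsConvexification v' w) : v = v' :=
  hv.1.eq_of_initialList_eq hv'.1 (fun c => (hv.2.1 c).trans (hv'.2.1 c).symm)
    (hv.2.2.trans hv'.2.2.symm)

lemma IsConvexification.exists_apply_eq {v w : Fin n → Fin k} (hv : IsConvexification v w)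
    {c : Fin k} (hc : ∃ i, w i = c) : ∃ i, v i = c := by
  obtain ⟨i, hi⟩ := hc
  obtain ⟨j, hj⟩ := card_pos.1 ((hv.2.1 c).symm ▸ card_pos.2 ⟨i, by simp [hi]⟩ :
    0 < #{j | v j = c})
  exact ⟨j, (mem_filter.1 hj).2⟩

end Words

section Snoc

variable {n k : ℕ}

lemma Fin.card_filter_univ_castSucc (p : Fin (n + 1) → Prop) [DecidablePred p] :
    #{i | p i} = #{i : Fin n | p i.castSucc} + if p (Fin.last n) then 1 else 0 := by
  simp only [card_filter, Fin.sum_univ_castSucc]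

lemma isInitialPos_snoc_castSucc (x : Fin n → Fin k) (c : Fin k) (j : Fin n) :
    isInitialPos (Fin.snoc x c : Fin (n + 1) → Fin k) j.castSucc ↔ isInitialPos x j := by
  refine ⟨fun h i hi => ?_, fun h i hi => ?_⟩
  · simpa using h i.castSucc (Fin.castSucc_lt_castSucc_iff.2 hi)
  · obtain ⟨i, rfl⟩ := Fin.exists_castSucc_eq.2 (hi.trans (Fin.castSucc_lt_last j)).ne
    simpa using h i (Fin.castSucc_lt_castSucc_iff.1 hi)

lemma not_isInitialPos_snoc_last {x : Fin n → Fin k} {c : Fin k} (hc : ∃ i, x i = c) :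
    ¬ isInitialPos (Fin.snoc x c : Fin (n + 1) → Fin k) (Fin.last n) := by
  obtain ⟨i, hi⟩ := hc
  exact fun h => h i.castSucc (Fin.castSucc_lt_last i) (by simp [hi])

lemma initialList_snoc {x : Fin n → Fin k} {c : Fin k} (hc : ∃ i, x i = c) :
    initialList (Fin.snoc x c : Fin (n + 1) → Fin k) = initialList x := by
  simp [initialList, List.finRange_succ_last, List.filter_append, not_isInitialPos_snoc_last hc,
    List.filter_map, Function.comp_def, isInitialPos_snoc_castSucc]

lemma card_filter_snoc_eq (x : Fin n → Fin k) (c c' : Fin k) :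
    #{i | (Fin.snoc x c : Fin (n + 1) → Fin k) i = c'}
      = #{i | x i = c'} + if c = c' then 1 else 0 := by
  rw [Fin.card_filter_univ_castSucc]
  simp [add_comm]

lemma IsConvexWord.snoc {v : Fin n → Fin k} (hv : IsConvexWord v) {i : Fin n}
    (hi : ∀ j, j ≤ i) {c : Fin k} (hvi : v i = c) :
    IsConvexWord (Fin.snoc v c : Fin (n + 1) → Fin k) := by
  intro a b d hab hbd had
  obtain ⟨a, rfl⟩ := Fin.exists_castSucc_eq.2 (hab.trans_le (hbd.le.trans (Fin.le_last d))).ne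
  obtain ⟨b, rfl⟩ := Fin.exists_castSucc_eq.2 (hbd.trans_le (Fin.le_last d)).ne
  rw [Fin.castSucc_lt_castSucc_iff] at hab
  cases d using Fin.lastCases with
  | last =>
    simp only [Fin.snoc_castSucc, Fin.snoc_last] at had ⊢
    exact (hv.apply_eq_of_le_of_le hab.le (hi b) (had.trans hvi.symm)).symm
  | cast d =>
    simp only [Fin.snoc_castSucc] at had ⊢
    exact hv a b d hab (Fin.castSucc_lt_castSucc_iff.1 hbd) had

lemma IsConvexification.snoc {v w : Fin n → Fin k} (hv : IsConvexification v w) {c : Fin k}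
    (hc : ∃ i, w i = c) (hconv : IsConvexWord (Fin.snoc v c : Fin (n + 1) → Fin k)) :
    IsConvexification (Fin.snoc v c : Fin (n + 1) → Fin k) (Fin.snoc w c) :=
  ⟨hconv, fun c' => by rw [card_filter_snoc_eq, card_filter_snoc_eq, hv.2.1],
    by rw [initialList_snoc (hv.exists_apply_eq hc), initialList_snoc hc, hv.2.2]⟩

lemma IsStdPerm.snoc {v : Fin n → Fin k} (hv : Function.Surjective v) {c : Fin k}
    {s : Perm (Fin n)} (hs : IsStdPerm n k v s) {s' : Perm (Fin (n + 1))}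
    (hs' : IsStdPerm (n + 1) k (Fin.snoc v c) s') : s' = extendLast s := by
  ext j
  cases j using Fin.lastCases with
  | last =>
    rw [hs', if_neg (not_isInitialPos_snoc_last (hv c)), extendLast_last, Fin.val_last,
      Fin.card_filter_univ_castSucc]
    simp only [Fin.castSucc_lt_last, true_and, isInitialPos_snoc_castSucc, lt_irrefl, false_and,
      if_false, add_zero]
    have := card_filter_add_card_filter_not (s := univ) fun i : Fin n => isInitialPos v i
    rw [card_filter_isInitialPos hv, card_univ, Fintype.card_fin] at this
    exact this
  | cast j =>
    rw [hs', extendLast_castSucc, Fin.val_castSucc, hs, Fin.card_filter_univ_castSucc]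
    simp only [Fin.snoc_castSucc, Fin.castSucc_lt_castSucc_iff, isInitialPos_snoc_castSucc,
      (Fin.castSucc_lt_last j).not_gt, false_and, if_false, add_zero]

end Snoc

section FirstOcc

variable {n k : ℕ} {w : Fin n → Fin k} {c : Fin k}

lemma firstOcc_le {j : Fin n} (hj : w j = c) : firstOcc n k w c ≤ j :=
  Nat.sInf_le ⟨j.isLt, hj⟩

lemma exists_firstOcc (hc : ∃ i, w i = c) : ∃ h : firstOcc n k w c < n, w ⟨_, h⟩ = c :=
  let ⟨i, hi⟩ := hc
  Nat.sInf_mem (s := {i | ∃ h : i < n, w ⟨i, h⟩ = c}) ⟨i, i.isLt, hi⟩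

lemma firstOcc_eq {p : Fin n} (hp : w p = c) (hmin : ∀ j, w j = c → p ≤ j) :
    firstOcc n k w c = p :=
  (firstOcc_le hp).antisymm <| le_csInf ⟨p, p.isLt, hp⟩ fun _ ⟨h, hj⟩ => hmin ⟨_, h⟩ hj

lemma isInitialPos_iff_eq_firstOcc {q : Fin n} :
    isInitialPos w q ↔ (q : ℕ) = firstOcc n k w (w q) := by
  refine ⟨fun hq => (firstOcc_eq rfl fun j hj => not_lt.1 fun hjq => hq j hjq hj).symm,
    fun hq j hjq hj => ?_⟩
  have := firstOcc_le hj
  rw [Fin.lt_def] at hjq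
  omega

lemma initialList_getLast?_of_firstOcc_le (hc : ∃ i, w i = c)
    (hlast : ∀ c', firstOcc n k w c' ≤ firstOcc n k w c) :
    (initialList w).getLast? = some c := by
  obtain ⟨hlt, hp⟩ := exists_firstOcc hc
  have hpinit : isInitialPos w ⟨_, hlt⟩ := isInitialPos_iff_eq_firstOcc.2 (by rw [hp])
  rw [initialList_getLast?_eq hpinit fun q hq hqinit => ?_, hp]
  have hqc := hlast (w q)
  rw [← isInitialPos_iff_eq_firstOcc.1 hqinit] at hqc
  exact absurd hqc (not_le.2 hq)

lemma firstOcc_snoc (c : Fin k) {c' : Fin k} (hc' : ∃ i, w i = c') :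
    firstOcc (n + 1) k (Fin.snoc w c) c' = firstOcc n k w c' := by
  obtain ⟨hlt, hp⟩ := exists_firstOcc hc'
  refine firstOcc_eq (p := Fin.castSucc ⟨_, hlt⟩) (by rw [Fin.snoc_castSucc, hp]) fun j hj => ?_
  cases j using Fin.lastCases with
  | last => exact (Fin.castSucc_lt_last _).le
  | cast j =>
    rw [Fin.snoc_castSucc] at hj
    exact Fin.castSucc_le_castSucc_iff.2 (firstOcc_le hj)

lemma sortKey_snoc (hc : ∃ i, w i = c) :
    sortKey (n + 1) k (Fin.snoc w c) = Fin.snoc (sortKey n k w) (toLex (firstOcc n k w c, n)) := by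
  funext j
  cases j using Fin.lastCases with
  | last => simp [sortKey, firstOcc_snoc c hc]
  | cast j => simp [sortKey, firstOcc_snoc c ⟨j, rfl⟩]

lemma Fin.strictMono_snoc {α : Type*} [Preorder α] {f : Fin n → α} {a : α} (hf : StrictMono f)
    (ha : ∀ i, f i < a) : StrictMono (Fin.snoc f a : Fin (n + 1) → α) := by
  intro i j hij
  cases j using Fin.lastCases with
  | last =>
    obtain ⟨i, rfl⟩ := Fin.exists_castSucc_eq.2 hij.ne
    simpa using ha i
  | cast j =>
    obtain ⟨i, rfl⟩ := Fin.exists_castSucc_eq.2 (hij.trans (Fin.castSucc_lt_last j)).ne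
    simpa using hf (Fin.castSucc_lt_castSucc_iff.1 hij)

lemma sortKey_injective (w : Fin n → Fin k) : Function.Injective (sortKey n k w) :=
  fun _ _ h => Fin.ext (congrArg Prod.snd (toLex.injective h))

/-- The new position carries the largest key, so sorting leaves it in place. -/
lemma sigmaPerm_snoc (hc : ∃ i, w i = c)
    (hlast : ∀ c', firstOcc n k w c' ≤ firstOcc n k w c) :
    sigmaPerm (n + 1) k (Fin.snoc w c) = extendLast (sigmaPerm n k w) := by
  set τ := Tuple.sort (sortKey n k w)
  have hτ : StrictMono (sortKey n k w ∘ τ) :=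
    (Tuple.monotone_sort _).strictMono_of_injective ((sortKey_injective w).comp τ.injective)
  have hsort : extendLast τ = Tuple.sort (sortKey (n + 1) k (Fin.snoc w c)) := by
    refine Tuple.eq_sort_iff.2 ⟨StrictMono.monotone ?_, fun i j hij h => ?_⟩
    · have hcomp : sortKey (n + 1) k (Fin.snoc w c) ∘ extendLast τ
          = Fin.snoc (sortKey n k w ∘ τ) (toLex (firstOcc n k w c, n)) := by
        funext j
        cases j using Fin.lastCases <;> simp [sortKey_snoc hc]
      rw [hcomp]
      refine Fin.strictMono_snoc hτ fun i => Prod.Lex.toLex_lt_toLex.2 ?_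
      exact (hlast _).lt_or_eq.imp_right fun h => ⟨h, (τ i).isLt⟩
    · exact absurd ((extendLast τ).injective (sortKey_injective _ h)) hij.ne
  rw [sigmaPerm, sigmaPerm, ← hsort, extendLast_inv]

end FirstOcc

theorem stmt17_general (n k : ℕ)
    (Sch : (N : ℕ) → Equiv.Perm (Fin N) → MvPolynomial ℕ ℤ)
    (D : ℕ → MvPolynomial ℕ ℤ → MvPolynomial ℕ ℤ)
    (hD : ∀ (a : ℕ) (f : MvPolynomial ℕ ℤ),
      (MvPolynomial.X a - MvPolynomial.X (a + 1)) * D a f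
        = f - MvPolynomial.rename (⇑(Equiv.swap a (a + 1))) f)
    (hSch0 : ∀ (N : ℕ) (w0 : Equiv.Perm (Fin N)),
      (∀ j : Fin N, (w0 j : ℕ) = N - 1 - (j : ℕ)) →
      Sch N w0 = ∏ j : Fin N, MvPolynomial.X (j : ℕ) ^ (N - 1 - (j : ℕ)))
    (hSch : ∀ (N : ℕ) (w : Equiv.Perm (Fin N)) (a b : Fin N),
      (b : ℕ) = (a : ℕ) + 1 → w b < w a →
      Sch N (w * Equiv.swap a b) = D (a : ℕ) (Sch N w))
    -- the Fubini word `w` and its last initial letter `c`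
    (w : Fin n → Fin k) (hw : ∀ c, ∃ i, w i = c)
    (c : Fin k) (hc : ∀ c', firstOcc n k w c' ≤ firstOcc n k w c)
    -- the convexifications of `w` and of `w ⊛ 1`
    (v : Fin n → Fin k) (hv : IsConvexification v w)
    (v1 : Fin (n + 1) → Fin k) (hv1 : IsConvexification v1 (Fin.snoc w c))
    -- the standardizations of those convexifications
    (s : Equiv.Perm (Fin n)) (hs : IsStdPerm n k v s)
    (s1 : Equiv.Perm (Fin (n + 1))) (hs1 : IsStdPerm (n + 1) k v1 s1) :
    v1 = Fin.snoc v c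
    ∧ (∀ j : Fin (n + 1), (s1 j : ℕ) =
        if h : (j : ℕ) < n then ((s ⟨j, h⟩ : Fin n) : ℕ) else n)
    ∧ (∀ j : Fin (n + 1), ((sigmaPerm (n + 1) k (Fin.snoc w c)) j : ℕ) =
        if h : (j : ℕ) < n then ((sigmaPerm n k w ⟨j, h⟩ : Fin n) : ℕ) else n)
    ∧ MvPolynomial.rename (permExt (n + 1) (sigmaPerm (n + 1) k (Fin.snoc w c))⁻¹)
          (Sch (n + 1) s1)
        = MvPolynomial.rename (permExt n (sigmaPerm n k w)⁻¹) (Sch n s) := by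
  have hcw : ∃ i, w i = c := hw c
  obtain ⟨i, hi⟩ : ∃ i : Fin n, ∀ j, j ≤ i :=
    have : Nonempty (Fin n) := ⟨hcw.choose⟩
    Finite.exists_max id
  have hvi : v i = c := Option.some_injective _ <| by
    rw [← hv.1.initialList_getLast? hi, hv.2.2, initialList_getLast?_of_firstOcc_le hcw hc]
  obtain rfl : v1 = Fin.snoc v c := hv1.eq (hv.snoc hcw (hv.1.snoc hi hvi))
  have hs1 : s1 = extendLast s := hs.snoc (fun c' => hv.exists_apply_eq (hw c')) hs1
  have hσ := sigmaPerm_snoc hcw hc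
  refine ⟨rfl, fun j => by rw [hs1, val_extendLast], fun j => by rw [hσ, val_extendLast], ?_⟩
  rw [hσ, extendLast_inv, permExt_extendLast, hs1, sch_extendLast hD hSch0 hSch]

/-- Let `w ∈ W_{n,k}` be a Fubini word with last initial letter `c`, and let
`w ⊛ 1 ∈ W_{n+1,k}` be obtained by appending `c` to `w`.  Then:
`conv(w ⊛ 1) = conv(w)` followed by `c`;  `std(conv(w ⊛ 1)) = std(conv(w)) × 1` in `S_{n+1}`;
`σ(w ⊛ 1) = σ(w) × 1` in `S_{n+1}`;  and consequently the Schubert polynomials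
`S_w := σ(w)⁻¹ . S_{std(conv(w))}` satisfy `S_{w ⊛ 1} = S_w`.

Here `Sch` is any family satisfying the defining properties of the classical Schubert
polynomials (staircase monomial at the longest element, divided difference recursion `D`),
and permutations act on polynomials by permuting variables. -/
theorem stmt17 (n k : ℕ) (hk : 0 < k) (hkn : k ≤ n)
    (Sch : (N : ℕ) → Equiv.Perm (Fin N) → MvPolynomial ℕ ℤ)
    (D : ℕ → MvPolynomial ℕ ℤ → MvPolynomial ℕ ℤ)
    (hD : ∀ (a : ℕ) (f : MvPolynomial ℕ ℤ),
      (MvPolynomial.X a - MvPolynomial.X (a + 1)) * D a f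
        = f - MvPolynomial.rename (⇑(Equiv.swap a (a + 1))) f)
    (hSch0 : ∀ (N : ℕ) (w0 : Equiv.Perm (Fin N)),
      (∀ j : Fin N, (w0 j : ℕ) = N - 1 - (j : ℕ)) →
      Sch N w0 = ∏ j : Fin N, MvPolynomial.X (j : ℕ) ^ (N - 1 - (j : ℕ)))
    (hSch : ∀ (N : ℕ) (w : Equiv.Perm (Fin N)) (a b : Fin N),
      (b : ℕ) = (a : ℕ) + 1 → w b < w a →
      Sch N (w * Equiv.swap a b) = D (a : ℕ) (Sch N w))
    -- the Fubini word `w` and its last initial letter `c`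
    (w : Fin n → Fin k) (hw : ∀ c, ∃ i, w i = c)
    (c : Fin k) (hc : ∀ c', firstOcc n k w c' ≤ firstOcc n k w c)
    -- the convexifications of `w` and of `w ⊛ 1`
    (v : Fin n → Fin k) (hv : IsConvexification v w)
    (v1 : Fin (n + 1) → Fin k) (hv1 : IsConvexification v1 (Fin.snoc w c))
    -- the standardizations of those convexifications
    (s : Equiv.Perm (Fin n)) (hs : IsStdPerm n k v s)
    (s1 : Equiv.Perm (Fin (n + 1))) (hs1 : IsStdPerm (n + 1) k v1 s1) :
    v1 = Fin.snoc v c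
    ∧ (∀ j : Fin (n + 1), (s1 j : ℕ) =
        if h : (j : ℕ) < n then ((s ⟨j, h⟩ : Fin n) : ℕ) else n)
    ∧ (∀ j : Fin (n + 1), ((sigmaPerm (n + 1) k (Fin.snoc w c)) j : ℕ) =
        if h : (j : ℕ) < n then ((sigmaPerm n k w ⟨j, h⟩ : Fin n) : ℕ) else n)
    ∧ MvPolynomial.rename (permExt (n + 1) (sigmaPerm (n + 1) k (Fin.snoc w c))⁻¹)
          (Sch (n + 1) s1)
        = MvPolynomial.rename (permExt n (sigmaPerm n k w)⁻¹) (Sch n s) :=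
  stmt17_general n k Sch D hD hSch0 hSch w hw c hc v hv v1 hv1 s hs s1 hs1
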